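/- For every δ ∈ (0,1) there exists a constant C = C(δ) > 0 such that for every natural number n, every j ∈ {2,3}, and every (u1,u2) ∈ Γ with u1 ≥ 1/(n+1) and u2 > 0: | (1/A_n^δ) · Σ_{k=0}^{n} A_{n−k}^{δ−1} · H*_{k,j}(u1,u2) | ≤ C / ( u1^{δ+1} · (n+1)^δ · u2 ). -/

import Mathlib

open MeasureTheory Finset

/-- The triangle `Γ = {(u₁,u₂) : 0 ≤ u₂ ≤ u₁/3, 0 ≤ u₁ ≤ 1}`. -/
def GammaT : Set (ℝ × ℝ) := {u | 0 ≤ u.2 ∧ u.2 ≤ u.1 / 3 ∧ 0 ≤ u.1 ∧ u.1 ≤ 1}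

open Finset in
/-- Cesàro numbers: `A_n^δ = (δ+1)(δ+2)⋯(δ+n)/n!`, with `A_0^δ = 1`. -/
noncomputable def cesaroA (δ : ℝ) (n : ℕ) : ℝ :=
  (∏ i ∈ Finset.range n, (δ + i + 1)) / n.factorial

/-- The function `H*_{k,2}`. -/
noncomputable def Hstar2 (k : ℕ) (u : ℝ × ℝ) : ℝ :=
  -((1 / 2) * Real.cos ((2 * (k : ℝ) + 1) * Real.pi * (u.1 + u.2) / 2) /
    (Real.sin (Real.pi * u.2) * Real.sin (Real.pi * (u.1 - u.2) / 2)))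

/-- The function `H*_{k,3}`. -/
noncomputable def Hstar3 (k : ℕ) (u : ℝ × ℝ) : ℝ :=
  (1 / 2) * Real.cos ((2 * (k : ℝ) + 1) * Real.pi * (u.1 - u.2) / 2) /
    (Real.sin (Real.pi * u.2) * Real.sin (Real.pi * (u.1 + u.2) / 2))

/-!
Reversing the order of summation turns the sum into `∑_{ν ≤ n} A_ν^{δ-1} cos (ψ - 2νφ)` with
`φ = π (u₁ ± u₂) / 2 ∈ [π u₁ / 3, 2π / 3]`. Split it at `M = ⌊1/φ⌋`. The head is at most
`∑_{ν ≤ M} A_ν^{δ-1} = A_M^δ ≲ φ^{-δ} / δ`. On the tail the weights `A_ν^{δ-1}` decrease, so Abel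
summation against `|∑ cos (ψ - 2νφ)| ≤ 1 / sin φ` bounds it by `A_{M+1}^{δ-1} / sin φ ≲ φ^{-δ}`.
Dividing by `A_n^δ ≥ (n+1)^δ` and by `sin (π u₂) sin (π (u₁ ∓ u₂) / 2) ≳ u₂ u₁` gives the claim.
-/

open Real

theorem one_add_mul_self_le_rpow_one_add_of_nonpos {x : ℝ} (hx : -1 < x) {p : ℝ}
    (hp1 : -1 ≤ p) (hp2 : p ≤ 0) : 1 + p * x ≤ (1 + x) ^ p := by
  have h1x : 0 < 1 + x := by linarith
  have hq : (1 + x) ^ (-p) ≤ 1 + -p * x :=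
    rpow_one_add_le_one_add_mul_self hx.le (by linarith) (by linarith)
  have hr : 0 < 1 + -p * x := by
    rcases le_total 0 x with h | h
    · nlinarith [mul_nonneg (neg_nonneg.2 hp2) h]
    · nlinarith [mul_nonpos_of_nonneg_of_nonpos (show 0 ≤ 1 + p by linarith) h]
  calc 1 + p * x ≤ 1 / (1 + -p * x) := by
        rw [le_div_iff₀ hr]; nlinarith [sq_nonneg (p * x)]
    _ ≤ 1 / (1 + x) ^ (-p) := one_div_le_one_div_of_le (rpow_pos_of_pos h1x _) hq
    _ = (1 + x) ^ p := by rw [rpow_neg h1x.le, one_div, inv_inv]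

theorem cesaroA_zero (δ : ℝ) : cesaroA δ 0 = 1 := by simp [cesaroA]

theorem cesaroA_succ (δ : ℝ) (n : ℕ) :
    cesaroA δ (n + 1) = cesaroA δ n * (1 + δ * (1 / (n + 1))) := by
  rw [cesaroA, cesaroA, prod_range_succ, Nat.factorial_succ]
  push_cast
  field_simp
  ring

theorem cesaroA_pos {δ : ℝ} (hδ : -1 < δ) (n : ℕ) : 0 < cesaroA δ n := by
  induction n with
  | zero => simp [cesaroA_zero]
  | succ n ih =>
    rw [cesaroA_succ]
    have : -1 < δ * (1 / (n + 1)) := by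
      rw [mul_one_div, lt_div_iff₀ (by positivity)]
      linarith [n.cast_nonneg (α := ℝ)]
    exact mul_pos ih (by linarith)

theorem cesaroA_sub_one_succ (δ : ℝ) (n : ℕ) :
    cesaroA (δ - 1) (n + 1) = cesaroA δ n * (δ / (n + 1)) := by
  rw [cesaroA, cesaroA, prod_range_succ', Nat.factorial_succ]
  push_cast
  field_simp
  ring_nf

theorem sum_range_cesaroA_sub_one (δ : ℝ) (n : ℕ) :
    ∑ ν ∈ range (n + 1), cesaroA (δ - 1) ν = cesaroA δ n := by
  induction n with
  | zero => simp [cesaroA_zero]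
  | succ n ih =>
    rw [sum_range_succ, ih, cesaroA_sub_one_succ, cesaroA_succ]
    field_simp

theorem cesaroA_antitone {δ : ℝ} (hδ0 : -1 < δ) (hδ1 : δ ≤ 0) : Antitone (cesaroA δ) := by
  refine antitone_nat_of_succ_le fun n => ?_
  rw [cesaroA_succ]
  refine mul_le_of_le_one_right (cesaroA_pos hδ0 n).le ?_
  nlinarith [one_div_pos.2 (show (0 : ℝ) < n + 1 by positivity)]

theorem add_one_add_one_rpow (n : ℕ) (δ : ℝ) :
    ((n : ℝ) + 1 + 1) ^ δ = ((n : ℝ) + 1) ^ δ * (1 + 1 / (n + 1)) ^ δ := by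
  rw [← mul_rpow (by positivity) (by positivity)]
  congr 1
  field_simp

theorem rpow_le_cesaroA {δ : ℝ} (hδ0 : 0 ≤ δ) (hδ1 : δ ≤ 1) (n : ℕ) :
    ((n : ℝ) + 1) ^ δ ≤ cesaroA δ n := by
  induction n with
  | zero => simp [cesaroA_zero]
  | succ n ih =>
    have hx0 : 0 < 1 / ((n : ℝ) + 1) := by positivity
    push_cast
    rw [add_one_add_one_rpow, cesaroA_succ]
    gcongr
    · exact (cesaroA_pos (by linarith) n).le
    · exact rpow_one_add_le_one_add_mul_self (by linarith) hδ0 hδ1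

theorem cesaroA_le_rpow {δ : ℝ} (hδ0 : -1 ≤ δ) (hδ1 : δ ≤ 0) (n : ℕ) :
    cesaroA δ n ≤ ((n : ℝ) + 1) ^ δ := by
  induction n with
  | zero => simp [cesaroA_zero]
  | succ n ih =>
    have hx : 1 / ((n : ℝ) + 1) ≤ 1 := by
      rw [div_le_one (by positivity)]; linarith [n.cast_nonneg (α := ℝ)]
    have hx0 : 0 < 1 / ((n : ℝ) + 1) := by positivity
    push_cast
    rw [add_one_add_one_rpow, cesaroA_succ]
    gcongr
    · nlinarith
    · exact one_add_mul_self_le_rpow_one_add_of_nonpos (by linarith) hδ0 hδ1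

theorem cesaroA_le_rpow_div {δ : ℝ} (hδ0 : 0 < δ) (hδ1 : δ ≤ 1) (n : ℕ) :
    cesaroA δ n ≤ ((n : ℝ) + 1) ^ δ / δ := by
  have hn : (0 : ℝ) < n + 1 := by positivity
  have h := cesaroA_le_rpow (δ := δ - 1) (by linarith) (by linarith) (n + 1)
  rw [cesaroA_sub_one_succ] at h
  push_cast at h
  rw [le_div_iff₀ hδ0]
  calc cesaroA δ n * δ = cesaroA δ n * (δ / (n + 1)) * (n + 1) := by field_simp
    _ ≤ ((n : ℝ) + 1 + 1) ^ (δ - 1) * (n + 1) := by gcongr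
    _ ≤ ((n : ℝ) + 1) ^ (δ - 1) * (n + 1) :=
        mul_le_mul_of_nonneg_right (rpow_le_rpow_of_nonpos hn (by linarith) (by linarith)) hn.le
    _ = ((n : ℝ) + 1) ^ δ := by rw [← rpow_add_one hn.ne']; ring_nf

theorem div_three_le_sin {x : ℝ} (h0 : 0 ≤ x) (h1 : x ≤ 2 * π / 3) : x / 3 ≤ sin x := by
  -- `sin` is concave on `[0, π]`, so it lies above its chord on `[0, 2π/3]`,
  -- whose slope `3√3 / (4π)` exceeds `1/3`
  have hπ := pi_pos
  set t := x / (2 * π / 3) with ht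
  have ht0 : 0 ≤ t := by positivity
  have ht1 : 0 ≤ 1 - t := by rw [sub_nonneg, ht, div_le_one (by positivity)]; exact h1
  have hconc := strictConcaveOn_sin_Icc.concaveOn.2 (show (0 : ℝ) ∈ Set.Icc 0 π by simp [hπ.le])
    (show 2 * π / 3 ∈ Set.Icc 0 π by constructor <;> linarith) ht1 ht0 (sub_add_cancel 1 t)
  have hx : t * (2 * π / 3) = x := by rw [ht]; field_simp
  have hsin : sin (2 * π / 3) = √3 / 2 := by
    rw [show 2 * π / 3 = π - π / 3 by ring, sin_pi_sub, sin_pi_div_three]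
  simp only [smul_eq_mul, sin_zero, mul_zero, zero_add, hx, hsin] at hconc
  have h17 : (1.7 : ℝ) ≤ √3 := by
    rw [le_sqrt (by norm_num) (by norm_num)]; norm_num
  nlinarith [pi_lt_d2]

theorem two_sin_mul_sum_range_cos (φ ψ : ℝ) (m : ℕ) :
    2 * sin φ * ∑ ν ∈ range m, cos (ψ - 2 * ν * φ) = sin (ψ + φ) - sin (ψ + φ - 2 * m * φ) := by
  induction m with
  | zero => simp
  | succ m ih =>
    rw [sum_range_succ, mul_add, ih]
    push_cast
    rw [show ψ + φ - 2 * ((m : ℝ) + 1) * φ = (ψ - 2 * m * φ) - φ by ring,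
      show ψ + φ - 2 * (m : ℝ) * φ = (ψ - 2 * m * φ) + φ by ring,
      sin_add (ψ - 2 * m * φ), sin_sub (ψ - 2 * m * φ)]
    ring

theorem abs_sum_range_cos_le {φ : ℝ} (hφ : 0 < sin φ) (ψ : ℝ) (m : ℕ) :
    |∑ ν ∈ range m, cos (ψ - 2 * ν * φ)| ≤ 1 / sin φ := by
  have h := two_sin_mul_sum_range_cos φ ψ m
  have hle : |2 * sin φ * ∑ ν ∈ range m, cos (ψ - 2 * ν * φ)| ≤ 2 := by
    rw [h]
    refine (abs_sub _ _).trans ?_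
    linarith [abs_sin_le_one (ψ + φ), abs_sin_le_one (ψ + φ - 2 * m * φ)]
  rw [abs_mul, abs_of_pos (by positivity)] at hle
  rw [le_div_iff₀ hφ]
  linarith

theorem abs_sum_range_mul_le_of_antitone {a e : ℕ → ℝ} {B : ℝ} (ha : Antitone a)
    (ha0 : ∀ i, 0 ≤ a i) (he : ∀ m, |∑ i ∈ range m, e i| ≤ B) (m : ℕ) :
    |∑ i ∈ range m, a i * e i| ≤ a 0 * B := by
  rcases m with _ | m
  · simpa using mul_nonneg (ha0 0) ((abs_nonneg _).trans (he 0))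
  have hparts := sum_range_by_parts a e (m + 1)
  simp only [smul_eq_mul, Nat.add_sub_cancel] at hparts
  have hinner : |∑ i ∈ range m, (a (i + 1) - a i) * ∑ j ∈ range (i + 1), e j|
      ≤ (a 0 - a m) * B := by
    calc _ ≤ ∑ i ∈ range m, (a i - a (i + 1)) * B := by
          refine (abs_sum_le_sum_abs _ _).trans (sum_le_sum fun i _ => ?_)
          rw [abs_mul, abs_sub_comm, abs_of_nonneg (sub_nonneg.2 (ha i.le_succ))]
          exact mul_le_mul_of_nonneg_left (he _) (sub_nonneg.2 (ha i.le_succ))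
      _ = (a 0 - a m) * B := by rw [← sum_mul, sum_range_sub']
  have hlast : |a m * ∑ i ∈ range (m + 1), e i| ≤ a m * B := by
    rw [abs_mul, abs_of_nonneg (ha0 m)]
    exact mul_le_mul_of_nonneg_left (he _) (ha0 m)
  rw [hparts]
  linarith [abs_sub (a m * ∑ i ∈ range (m + 1), e i)
    (∑ i ∈ range m, (a (i + 1) - a i) * ∑ j ∈ range (i + 1), e j)]

theorem sum_range_reflect_mul_cos (a : ℕ → ℝ) (n : ℕ) (φ : ℝ) :
    ∑ k ∈ range (n + 1), a (n - k) * cos ((2 * k + 1) * φ)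
      = ∑ ν ∈ range (n + 1), a ν * cos ((2 * n + 1) * φ - 2 * ν * φ) := by
  rw [← sum_range_reflect]
  refine sum_congr rfl fun ν hν => ?_
  have hνn : ν ≤ n := Nat.lt_succ_iff.mp (mem_range.mp hν)
  rw [Nat.add_sub_cancel, Nat.sub_sub_self hνn, Nat.cast_sub hνn]
  ring_nf

theorem abs_sum_range_cesaroA_mul_cos_le {δ : ℝ} (hδ : 0 < δ) (x : ℕ → ℝ) (m : ℕ) :
    |∑ ν ∈ range (m + 1), cesaroA (δ - 1) ν * cos (x ν)| ≤ cesaroA δ m := by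
  rw [← sum_range_cesaroA_sub_one]
  refine (abs_sum_le_sum_abs _ _).trans (sum_le_sum fun ν _ => ?_)
  have hA := cesaroA_pos (show -1 < δ - 1 by linarith) ν
  rw [abs_mul, abs_of_pos hA]
  exact mul_le_of_le_one_right hA.le (abs_cos_le_one _)

theorem abs_sum_Ico_cesaroA_mul_cos_le {δ : ℝ} (hδ0 : 0 < δ) (hδ1 : δ ≤ 1) {φ : ℝ}
    (hφ : 0 < sin φ) (ψ : ℝ) (m N : ℕ) :
    |∑ ν ∈ Ico m N, cesaroA (δ - 1) ν * cos (ψ - 2 * ν * φ)| ≤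
      cesaroA (δ - 1) m * (1 / sin φ) := by
  have hshift : ∀ i : ℕ, ψ - 2 * ((m + i : ℕ) : ℝ) * φ = (ψ - 2 * m * φ) - 2 * i * φ := by
    intro i; push_cast; ring
  simp only [sum_Ico_eq_sum_range, hshift]
  have hanti := cesaroA_antitone (δ := δ - 1) (by linarith) (by linarith)
  simpa using abs_sum_range_mul_le_of_antitone (a := fun i => cesaroA (δ - 1) (m + i))
    (fun i j hij => hanti (Nat.add_le_add_left hij m))
    (fun i => (cesaroA_pos (by linarith) _).le) (abs_sum_range_cos_le hφ _) (N - m)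

theorem abs_sum_range_cesaroA_mul_cos_le_div_rpow {δ : ℝ} (hδ0 : 0 < δ) (hδ1 : δ ≤ 1)
    {φ : ℝ} (hφ0 : 0 < φ) (hφ : φ ≤ 2 * π / 3) (ψ : ℝ) (n : ℕ) :
    |∑ ν ∈ range (n + 1), cesaroA (δ - 1) ν * cos (ψ - 2 * ν * φ)| ≤ (4 / δ + 3) / φ ^ δ := by
  have hφ3 : φ ≤ 3 := by linarith [pi_lt_d2]
  have hφδ : 0 < φ ^ δ := rpow_pos_of_pos hφ0 δ
  have hsin : φ / 3 ≤ sin φ := div_three_le_sin hφ0.le hφ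
  set M := ⌊1 / φ⌋₊
  have hM : (M : ℝ) ≤ 1 / φ := Nat.floor_le (by positivity)
  have hM' : 1 / φ ≤ (M : ℝ) + 1 + 1 := by linarith [Nat.lt_floor_add_one (1 / φ)]
  have hhead : ∀ m ≤ M,
      |∑ ν ∈ range (m + 1), cesaroA (δ - 1) ν * cos (ψ - 2 * ν * φ)| ≤ 4 / δ / φ ^ δ := by
    intro m hm
    have hmφ : (m : ℝ) + 1 ≤ 4 / φ := by
      have : (m : ℝ) ≤ M := by exact_mod_cast hm
      have : 1 ≤ 3 / φ := by rw [le_div_iff₀ hφ0]; linarith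
      linarith [show 1 / φ + 3 / φ = 4 / φ by ring]
    calc _ ≤ cesaroA δ m := abs_sum_range_cesaroA_mul_cos_le hδ0 _ m
      _ ≤ ((m : ℝ) + 1) ^ δ / δ := cesaroA_le_rpow_div hδ0 hδ1 m
      _ ≤ (4 / φ) ^ δ / δ := by gcongr
      _ = 4 ^ δ / φ ^ δ / δ := by rw [div_rpow (by norm_num) hφ0.le]
      _ ≤ 4 ^ (1 : ℝ) / φ ^ δ / δ := by
          gcongr
          norm_num
      _ = 4 / δ / φ ^ δ := by rw [rpow_one]; ring
  have htail : ∀ N,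
      |∑ ν ∈ Ico (M + 1) N, cesaroA (δ - 1) ν * cos (ψ - 2 * ν * φ)| ≤ 3 / φ ^ δ := by
    intro N
    have hA : cesaroA (δ - 1) (M + 1) ≤ φ / φ ^ δ :=
      calc cesaroA (δ - 1) (M + 1) ≤ ((M : ℝ) + 1 + 1) ^ (δ - 1) := by
            exact_mod_cast cesaroA_le_rpow (by linarith) (by linarith) (M + 1)
        _ ≤ (1 / φ) ^ (δ - 1) := rpow_le_rpow_of_nonpos (by positivity) hM' (by linarith)
        _ = φ / φ ^ δ := by
            rw [div_rpow zero_le_one hφ0.le, one_rpow, rpow_sub_one hφ0.ne', one_div_div]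
    calc _ ≤ cesaroA (δ - 1) (M + 1) * (1 / sin φ) :=
          abs_sum_Ico_cesaroA_mul_cos_le hδ0 hδ1 (by linarith) ψ (M + 1) N
      _ ≤ φ / φ ^ δ * (3 / φ) := by
          refine mul_le_mul hA ?_ (one_div_pos.2 (by linarith)).le (by positivity)
          calc 1 / sin φ ≤ 1 / (φ / 3) := one_div_le_one_div_of_le (by positivity) hsin
            _ = 3 / φ := one_div_div φ 3
      _ = 3 / φ ^ δ := by field_simp
  rcases le_or_gt n M with hn | hn
  · calc _ ≤ 4 / δ / φ ^ δ := hhead n hn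
      _ ≤ (4 / δ + 3) / φ ^ δ := by gcongr; linarith
  · rw [← sum_range_add_sum_Ico _ (by omega : M + 1 ≤ n + 1)]
    calc _ ≤ 4 / δ / φ ^ δ + 3 / φ ^ δ :=
          (abs_add_le _ _).trans (add_le_add (hhead M le_rfl) (htail _))
      _ = (4 / δ + 3) / φ ^ δ := by ring

theorem abs_cesaroMean_cos_le {δ : ℝ} (hδ0 : 0 < δ) (hδ1 : δ ≤ 1) (n : ℕ) {u₁ u₂ φ φ' c : ℝ}
    (hc : |c| ≤ 1 / 2) (hu₁ : 0 < u₁) (hu₂ : 0 < u₂) (hu₂' : u₂ ≤ 1 / 2)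
    (hφ₁ : π * u₁ / 3 ≤ φ) (hφ₂ : φ ≤ 2 * π / 3) (hφ'₁ : π * u₁ / 3 ≤ φ') (hφ'₂ : φ' ≤ 2 * π / 3) :
    |(1 / cesaroA δ n) * ∑ k ∈ range (n + 1),
        cesaroA (δ - 1) (n - k) * (c * cos ((2 * k + 1) * φ) / (sin (π * u₂) * sin φ'))| ≤
      (3 / δ + 9 / 4) / (u₁ ^ (δ + 1) * ((n : ℝ) + 1) ^ δ * u₂) := by
  have hπ := pi_pos
  have hπu₁ : 0 < π * u₁ / 3 := by positivity
  have hu₁φ : u₁ ≤ φ := by nlinarith [pi_gt_three]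
  have hsin₂ : 2 * u₂ ≤ sin (π * u₂) := by
    calc 2 * u₂ = 2 / π * (π * u₂) := by field_simp
      _ ≤ sin (π * u₂) := mul_le_sin (by positivity) (by nlinarith)
  have hsin' : u₁ / 3 ≤ sin φ' := by
    nlinarith [div_three_le_sin (by linarith) hφ'₂, pi_gt_three]
  have hS := abs_sum_range_cesaroA_mul_cos_le_div_rpow hδ0 hδ1 (by linarith) hφ₂
    ((2 * n + 1) * φ) n
  rw [← sum_range_reflect_mul_cos] at hS
  have hsum : ∑ k ∈ range (n + 1),
        cesaroA (δ - 1) (n - k) * (c * cos ((2 * k + 1) * φ) / (sin (π * u₂) * sin φ')) =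
      c / (sin (π * u₂) * sin φ') *
        ∑ k ∈ range (n + 1), cesaroA (δ - 1) (n - k) * cos ((2 * k + 1) * φ) := by
    rw [mul_sum]; exact sum_congr rfl fun k _ => by ring
  have hA : ((n : ℝ) + 1) ^ δ ≤ cesaroA δ n := rpow_le_cesaroA hδ0.le hδ1 n
  have hD : 0 < sin (π * u₂) * sin φ' := mul_pos (by linarith) (by linarith)
  rw [hsum, abs_mul, abs_mul, abs_of_pos (one_div_pos.2 (cesaroA_pos (by linarith) n)), abs_div,
    abs_of_pos hD]
  calc _ ≤ 1 / ((n : ℝ) + 1) ^ δ * (1 / 2 / (2 * u₂ * (u₁ / 3)) * ((4 / δ + 3) / u₁ ^ δ)) := by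
        gcongr
        · linarith
        · exact hS.trans (by gcongr)
    _ = (3 / δ + 9 / 4) / (u₁ ^ (δ + 1) * ((n : ℝ) + 1) ^ δ * u₂) := by
        rw [rpow_add_one hu₁.ne']; field_simp; ring

theorem Hstar2_eq (k : ℕ) (u : ℝ × ℝ) :
    Hstar2 k u = -(1 / 2) * cos ((2 * k + 1) * (π * (u.1 + u.2) / 2)) /
      (sin (π * u.2) * sin (π * (u.1 - u.2) / 2)) := by
  rw [Hstar2]
  ring_nf

theorem Hstar3_eq (k : ℕ) (u : ℝ × ℝ) :
    Hstar3 k u = 1 / 2 * cos ((2 * k + 1) * (π * (u.1 - u.2) / 2)) /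
      (sin (π * u.2) * sin (π * (u.1 + u.2) / 2)) := by
  rw [Hstar3]
  ring_nf

theorem stmt_11 :
    ∀ δ : ℝ, 0 < δ → δ < 1 → ∃ C : ℝ, 0 < C ∧
      ∀ n : ℕ, ∀ u : ℝ × ℝ, u ∈ GammaT → 1 / ((n : ℝ) + 1) ≤ u.1 → 0 < u.2 →
        (∀ H : ℕ → (ℝ × ℝ) → ℝ, (H = Hstar2 ∨ H = Hstar3) →
          |(1 / cesaroA δ n) *
              ∑ k ∈ Finset.range (n + 1), cesaroA (δ - 1) (n - k) * H k u| ≤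
            C / (u.1 ^ (δ + 1) * (n + 1 : ℝ) ^ δ * u.2)) := by
  intro δ hδ0 hδ1
  refine ⟨3 / δ + 9 / 4, by positivity, fun n u hu _ hu₂ H hH => ?_⟩
  obtain ⟨-, hu₂₁, -, hu₁⟩ := hu
  have hπ := pi_pos
  have hplus : π * u.1 / 3 ≤ π * (u.1 + u.2) / 2 ∧ π * (u.1 + u.2) / 2 ≤ 2 * π / 3 := by
    constructor <;> nlinarith
  have hminus : π * u.1 / 3 ≤ π * (u.1 - u.2) / 2 ∧ π * (u.1 - u.2) / 2 ≤ 2 * π / 3 := by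
    constructor <;> nlinarith
  have hu₁0 : 0 < u.1 := by linarith
  rcases hH with rfl | rfl
  · simp only [Hstar2_eq]
    exact abs_cesaroMean_cos_le hδ0 hδ1.le n (by norm_num) hu₁0 hu₂ (by linarith)
      hplus.1 hplus.2 hminus.1 hminus.2
  · simp only [Hstar3_eq]
    exact abs_cesaroMean_cos_le hδ0 hδ1.le n (by norm_num) hu₁0 hu₂ (by linarith)
      hminus.1 hminus.2 hplus.1 hplus.2
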